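/- arXiv:math/0607364 — 2 statements merged into one kernel-verified Lean document; each statement's English description precedes it below -/
import Mathlib

section
/- For all s > √30, the function R(s) = s·e^{s²/2}·∫_s^∞ e^{-y²/2} dy satisfies 1 - s^{-2} + (5/2)s^{-4} < R(s) < 1 - s^{-2} + 3s^{-4}. -/
/-! Integrating by parts, `I n := ∫_s^∞ e^{-y²/2} y⁻ⁿ dy` satisfies
`I n + (n + 1) I (n + 2) = e^{-s²/2} s^{-(n+1)}` with every `I n` positive. Unrolling this three
times gives `R(s) = 1 - s⁻² + 3s⁻⁴ - 15 s e^{s²/2} I 6`, and the same recursion shows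
`0 < s e^{s²/2} I 6 < s⁻⁶`; the error term `15 s⁻⁶` is below `s⁻⁴ / 2` exactly when `s² > 30`. -/

open Real MeasureTheory Set Filter

lemma tendsto_exp_neg_sq_div_two_atTop :
    Tendsto (fun y : ℝ => exp (-y ^ 2 / 2)) atTop (nhds 0) := by
  refine tendsto_exp_atBot.comp ?_
  simp_rw [neg_div]
  exact tendsto_neg_atTop_atBot.comp
    ((tendsto_pow_atTop two_ne_zero).atTop_div_const two_pos)

lemma integrableOn_exp_neg_sq_div_two_div_pow (n : ℕ) {s : ℝ} (hs : 0 < s) :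
    IntegrableOn (fun y : ℝ => exp (-y ^ 2 / 2) / y ^ n) (Ioi s) := by
  have hφ : Integrable (fun y : ℝ => exp (-y ^ 2 / 2)) := by
    simpa [neg_div, div_eq_inv_mul] using integrable_exp_neg_mul_sq (b := 1 / 2) (by norm_num)
  refine Integrable.mono' (hφ.integrableOn.div_const (s ^ n))
    (by fun_prop : Measurable fun y : ℝ => exp (-y ^ 2 / 2) / y ^ n).aestronglyMeasurable ?_
  rw [ae_restrict_iff' measurableSet_Ioi]
  refine ae_of_all _ fun y (hy : s < y) => ?_
  have hy0 : 0 < y := hs.trans hy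
  rw [norm_of_nonneg (by positivity)]
  gcongr

lemma setIntegral_exp_neg_sq_div_two_div_pow_pos (n : ℕ) {s : ℝ} (hs : 0 < s) :
    0 < ∫ y in Ioi s, exp (-y ^ 2 / 2) / y ^ n := by
  have hpos : ∀ y ∈ Ioi s, 0 < exp (-y ^ 2 / 2) / y ^ n := fun y (hy : s < y) => by
    have := hs.trans hy
    positivity
  rw [setIntegral_pos_iff_support_of_nonneg_ae
    ((ae_restrict_iff' measurableSet_Ioi).2 (ae_of_all _ fun y hy => (hpos y hy).le))
    (integrableOn_exp_neg_sq_div_two_div_pow n hs),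
    inter_eq_right.2 (show Ioi s ⊆ Function.support _ from fun y hy => (hpos y hy).ne')]
  simp

lemma hasDerivAt_exp_neg_sq_div_two_div_pow (n : ℕ) {y : ℝ} (hy : y ≠ 0) :
    HasDerivAt (fun y : ℝ => -(exp (-y ^ 2 / 2) / y ^ (n + 1)))
      (exp (-y ^ 2 / 2) / y ^ n + (n + 1) * (exp (-y ^ 2 / 2) / y ^ (n + 2))) y := by
  have hq : HasDerivAt (fun y : ℝ => -y ^ 2 / 2) (-y) y :=
    ((hasDerivAt_pow 2 y).fun_neg.div_const 2).congr_deriv (by ring)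
  refine (hq.exp.fun_div (hasDerivAt_pow (n + 1) y) (pow_ne_zero _ hy)).fun_neg.congr_deriv ?_
  rw [Nat.add_sub_cancel]
  field_simp
  push_cast
  ring

lemma setIntegral_exp_neg_sq_div_two_div_pow_add (n : ℕ) {s : ℝ} (hs : 0 < s) :
    (∫ y in Ioi s, exp (-y ^ 2 / 2) / y ^ n) +
        (n + 1) * ∫ y in Ioi s, exp (-y ^ 2 / 2) / y ^ (n + 2) =
      exp (-s ^ 2 / 2) / s ^ (n + 1) := by
  have hlim : Tendsto (fun y : ℝ => -(exp (-y ^ 2 / 2) / y ^ (n + 1))) atTop (nhds 0) := by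
    simpa using (tendsto_exp_neg_sq_div_two_atTop.div_atTop
      (tendsto_pow_atTop n.succ_ne_zero)).neg
  have hn := integrableOn_exp_neg_sq_div_two_div_pow n hs
  have hn2 := (integrableOn_exp_neg_sq_div_two_div_pow (n + 2) hs).const_mul ((n : ℝ) + 1)
  rw [← integral_const_mul, ← integral_add hn hn2, integral_Ioi_of_hasDerivAt_of_tendsto'
      (fun y (hy : s ≤ y) => hasDerivAt_exp_neg_sq_div_two_div_pow n (hs.trans_le hy).ne')
      (hn.add hn2) hlim]
  ring

lemma mul_exp_mul_setIntegral_exp_neg_sq_div_two_div_pow_lt (n : ℕ) {s : ℝ} (hs : 0 < s) :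
    s * exp (s ^ 2 / 2) * (∫ y in Ioi s, exp (-y ^ 2 / 2) / y ^ n) < 1 / s ^ n := by
  have hlt : (∫ y in Ioi s, exp (-y ^ 2 / 2) / y ^ n) < exp (-s ^ 2 / 2) / s ^ (n + 1) := by
    have := mul_pos n.cast_add_one_pos (setIntegral_exp_neg_sq_div_two_div_pow_pos (n + 2) hs)
    linarith [setIntegral_exp_neg_sq_div_two_div_pow_add n hs]
  calc s * exp (s ^ 2 / 2) * (∫ y in Ioi s, exp (-y ^ 2 / 2) / y ^ n)
      < s * exp (s ^ 2 / 2) * (exp (-s ^ 2 / 2) / s ^ (n + 1)) := by gcongr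
    _ = 1 / s ^ n := by
      rw [neg_div, exp_neg]
      field_simp
      ring

lemma mul_exp_mul_setIntegral_exp_neg_sq_div_two_eq {s : ℝ} (hs : 0 < s) :
    s * exp (s ^ 2 / 2) * (∫ y in Ioi s, exp (-y ^ 2 / 2)) =
      1 - 1 / s ^ 2 + 3 / s ^ 4 -
        15 * (s * exp (s ^ 2 / 2) * ∫ y in Ioi s, exp (-y ^ 2 / 2) / y ^ 6) := by
  have h0 := setIntegral_exp_neg_sq_div_two_div_pow_add 0 hs
  have h2 := setIntegral_exp_neg_sq_div_two_div_pow_add 2 hs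
  have h4 := setIntegral_exp_neg_sq_div_two_div_pow_add 4 hs
  have hI : (∫ y in Ioi s, exp (-y ^ 2 / 2)) = exp (-s ^ 2 / 2) * (1 / s - 1 / s ^ 3 + 3 / s ^ 5)
      - 15 * ∫ y in Ioi s, exp (-y ^ 2 / 2) / y ^ 6 := by
    simp only [pow_zero, div_one] at h0
    linear_combination h0 - h2 + 3 * h4
  rw [hI, neg_div, exp_neg]
  field_simp

/-- Mills' ratio bounds: for `s > √30`,
`1 - s⁻² + (5/2)s⁻⁴ < R(s) < 1 - s⁻² + 3s⁻⁴` where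
`R(s) = s · exp(s²/2) · ∫_s^∞ exp(-y²/2) dy`. -/
theorem stmt_0 (s : ℝ) (hs : s > Real.sqrt 30) :
    1 - 1 / s ^ 2 + (5 / 2) / s ^ 4 <
      s * Real.exp (s ^ 2 / 2) * ∫ y in Set.Ioi s, Real.exp (-y ^ 2 / 2) ∧
    s * Real.exp (s ^ 2 / 2) * (∫ y in Set.Ioi s, Real.exp (-y ^ 2 / 2)) <
      1 - 1 / s ^ 2 + 3 / s ^ 4 := by
  have hs0 : 0 < s := (sqrt_nonneg 30).trans_lt hs
  have hs2 : 30 < s ^ 2 := (sqrt_lt' hs0).1 hs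
  have hpos : 0 < s * exp (s ^ 2 / 2) * ∫ y in Ioi s, exp (-y ^ 2 / 2) / y ^ 6 :=
    mul_pos (by positivity) (setIntegral_exp_neg_sq_div_two_div_pow_pos 6 hs0)
  have hlt := mul_exp_mul_setIntegral_exp_neg_sq_div_two_div_pow_lt 6 hs0
  have hgap : 15 * (1 / s ^ 6) < 3 / s ^ 4 - 5 / 2 / s ^ 4 := by
    field_simp
    nlinarith [pow_pos hs0 4]
  rw [mul_exp_mul_setIntegral_exp_neg_sq_div_two_eq hs0]
  constructor <;> linarith
end

section
/- Let s_γ be defined by R(s_γ) = 1 - γ, where R(s) = s·e^{s²/2}·∫_s^∞ e^{-y²/2} dy. Then for all 0 < γ ≤ 1/30, |s_γ - γ^{-1/2}| ≤ 2·γ^{1/2}. -/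
/-!
Integrating by parts against `e^{-y²/2}` gives `1 - s⁻² ≤ R(s) ≤ 1 - s⁻² + 3 s⁻⁴`, so `R(s) = 1 - γ`
forces `γ ≤ s⁻²`, i.e. `s ≤ γ^{-1/2}`, and `s⁻² - 3 s⁻⁴ ≤ γ`. The latter yields
`s ≥ γ^{-1/2} - 2 γ^{1/2}` as soon as `s ≥ 3`, which follows from the cruder bound
`R(s) ≤ e^{δ²/2} s / (s + δ)`, obtained by dominating `e^{-y²/2}` by the tangent exponential
`e^{c²/2 - c y}` with `c = s + δ`.
-/

open Real MeasureTheory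

/-- `R(s) = s·e^{s²/2}·∫_s^∞ e^{-y²/2} dy`, i.e. `s` times the standard normal Mills' ratio. -/
noncomputable def millsR (s : ℝ) : ℝ :=
  s * Real.exp (s ^ 2 / 2) * ∫ y in Set.Ioi s, Real.exp (-y ^ 2 / 2)

open Set Filter Topology

theorem neg_le_integral_Ioi_of_hasDerivAt_of_le {φ F F' : ℝ → ℝ} {a : ℝ}
    (hF : ∀ x ∈ Ici a, HasDerivAt F (F' x) x) (hF0 : Tendsto F atTop (𝓝 0))
    (hφ : IntegrableOn φ (Ioi a)) (hle : ∀ x ∈ Ioi a, F' x ≤ φ x) :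
    -F a ≤ ∫ x in Ioi a, φ x := by
  have hint : ∀ᶠ b in atTop, F b - F a ≤ ∫ x in a..b, φ x :=
    (eventually_ge_atTop a).mono fun b hab =>
      intervalIntegral.sub_le_integral_of_hasDeriv_right_of_le hab
        (fun x hx => (hF x hx.1).continuousAt.continuousWithinAt)
        (fun x hx => (hF x (Ioo_subset_Icc_self hx).1).hasDerivWithinAt)
        ((integrableOn_Ici_iff_integrableOn_Ioi (f := φ) (b := a)).2 hφ |>.mono_set
          Icc_subset_Ici_self)
        (fun x hx => hle x hx.1)
  simpa using le_of_tendsto_of_tendsto (hF0.sub_const (F a))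
    (intervalIntegral_tendsto_integral_Ioi a hφ tendsto_id) hint

theorem integral_Ioi_le_neg_of_hasDerivAt_of_le {φ F F' : ℝ → ℝ} {a : ℝ}
    (hF : ∀ x ∈ Ici a, HasDerivAt F (F' x) x) (hF0 : Tendsto F atTop (𝓝 0))
    (hφ : IntegrableOn φ (Ioi a)) (hle : ∀ x ∈ Ioi a, φ x ≤ F' x) :
    ∫ x in Ioi a, φ x ≤ -F a := by
  have := neg_le_integral_Ioi_of_hasDerivAt_of_le (F := fun x => -F x) (φ := fun x => -φ x)
    (fun x hx => (hF x hx).neg) (by simpa using hF0.neg) hφ.neg fun x hx => neg_le_neg (hle x hx)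
  rw [integral_neg] at this
  linarith

section GaussianTail

theorem integrableOn_exp_neg_sq_div_two (s : ℝ) :
    IntegrableOn (fun y : ℝ => exp (-y ^ 2 / 2)) (Ioi s) := by
  simpa [neg_div, div_eq_inv_mul] using
    (integrable_exp_neg_mul_sq (b := 1 / 2) (by norm_num)).integrableOn (s := Ioi s)

theorem tendsto_exp_neg_sq_div_two_mul {p : ℝ → ℝ} (hp : Tendsto p atTop (𝓝 0)) :
    Tendsto (fun y => exp (-y ^ 2 / 2) * p y) atTop (𝓝 0) := by
  have hexp : Tendsto (fun y : ℝ => exp (-y ^ 2 / 2)) atTop (𝓝 0) :=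
    tendsto_exp_atBot.comp <|
      (tendsto_neg_atTop_atBot.comp (tendsto_pow_atTop two_ne_zero)).atBot_div_const two_pos
  simpa using hexp.mul hp

theorem hasDerivAt_exp_neg_sq_div_two_mul {p : ℝ → ℝ} {d y : ℝ} (hp : HasDerivAt p d y) :
    HasDerivAt (fun y => exp (-y ^ 2 / 2) * p y) (exp (-y ^ 2 / 2) * (d - y * p y)) y := by
  have hq : HasDerivAt (fun y : ℝ => -y ^ 2 / 2) (-y) y :=
    ((hasDerivAt_pow 2 y).neg.div_const 2).congr_deriv (by push_cast; ring)
  exact (hq.exp.mul hp).congr_deriv (by ring)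

variable {s : ℝ}

theorem exp_neg_sq_div_two_mul_le_integral {p p' : ℝ → ℝ}
    (hp : ∀ y ∈ Ici s, HasDerivAt p (p' y) y) (hp0 : Tendsto p atTop (𝓝 0))
    (hle : ∀ y ∈ Ioi s, y * p y - p' y ≤ 1) :
    exp (-s ^ 2 / 2) * p s ≤ ∫ y in Ioi s, exp (-y ^ 2 / 2) := by
  simpa using neg_le_integral_Ioi_of_hasDerivAt_of_le (F := fun y => -(exp (-y ^ 2 / 2) * p y))
    (fun y hy => (hasDerivAt_exp_neg_sq_div_two_mul (hp y hy)).neg)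
    (by simpa using (tendsto_exp_neg_sq_div_two_mul hp0).neg) (integrableOn_exp_neg_sq_div_two s)
    fun y hy => by nlinarith [hle y hy, exp_pos (-y ^ 2 / 2)]

theorem integral_le_exp_neg_sq_div_two_mul {p p' : ℝ → ℝ}
    (hp : ∀ y ∈ Ici s, HasDerivAt p (p' y) y) (hp0 : Tendsto p atTop (𝓝 0))
    (hle : ∀ y ∈ Ioi s, 1 ≤ y * p y - p' y) :
    ∫ y in Ioi s, exp (-y ^ 2 / 2) ≤ exp (-s ^ 2 / 2) * p s := by
  simpa using integral_Ioi_le_neg_of_hasDerivAt_of_le (F := fun y => -(exp (-y ^ 2 / 2) * p y))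
    (fun y hy => (hasDerivAt_exp_neg_sq_div_two_mul (hp y hy)).neg)
    (by simpa using (tendsto_exp_neg_sq_div_two_mul hp0).neg) (integrableOn_exp_neg_sq_div_two s)
    fun y hy => by nlinarith [hle y hy, exp_pos (-y ^ 2 / 2)]

theorem integral_exp_neg_sq_div_two_le {c : ℝ} (hc : 0 < c) :
    ∫ y in Ioi s, exp (-y ^ 2 / 2) ≤ exp (c ^ 2 / 2 - c * s) / c := by
  have hF (y : ℝ) :
      HasDerivAt (fun y => -(exp (c ^ 2 / 2 - c * y) / c)) (exp (c ^ 2 / 2 - c * y)) y :=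
    (((hasDerivAt_id' y).const_mul c).const_sub (c ^ 2 / 2)).exp.div_const c |>.neg.congr_deriv
      (by field_simp)
  have hF0 : Tendsto (fun y => -(exp (c ^ 2 / 2 - c * y) / c)) atTop (𝓝 0) := by
    have : Tendsto (fun y => c ^ 2 / 2 - c * y) atTop atBot :=
      tendsto_atBot_add_const_left _ _
        (tendsto_neg_atTop_atBot.comp (tendsto_id.const_mul_atTop hc))
    simpa using ((tendsto_exp_atBot.comp this).div_const c).neg
  simpa using integral_Ioi_le_neg_of_hasDerivAt_of_le (fun y _ => hF y) hF0
    (integrableOn_exp_neg_sq_div_two s) fun y _ => exp_le_exp.2 (by nlinarith [sq_nonneg (y - c)])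

end GaussianTail

section MillsRatio

theorem mul_exp_sq_div_two_mul_exp_neg (s q : ℝ) :
    s * exp (s ^ 2 / 2) * (exp (-s ^ 2 / 2) * q) = s * q := by
  rw [mul_assoc, ← mul_assoc (exp _), ← exp_add, neg_div, add_neg_cancel, exp_zero, one_mul]

variable {s : ℝ}

theorem one_sub_inv_sq_le_millsR (hs : 0 < s) : 1 - s⁻¹ ^ 2 ≤ millsR s := by
  have hu := tendsto_inv_atTop_zero (𝕜 := ℝ)
  have hp (y : ℝ) (hy : y ∈ Ici s) :
      HasDerivAt (fun y => y⁻¹ - y⁻¹ ^ 3) (-y⁻¹ ^ 2 + 3 * y⁻¹ ^ 4) y := by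
    have hy0 : y ≠ 0 := (hs.trans_le hy).ne'
    exact ((hasDerivAt_inv hy0).sub ((hasDerivAt_inv hy0).pow 3)).congr_deriv
      (by rw [← inv_pow]; push_cast; ring)
  have hI := exp_neg_sq_div_two_mul_le_integral hp (by simpa using hu.sub (hu.pow 3))
    fun y hy => by
      have hy0 : 0 < y := hs.trans hy
      have : y * (y⁻¹ - y⁻¹ ^ 3) - (-y⁻¹ ^ 2 + 3 * y⁻¹ ^ 4) = 1 - 3 * y⁻¹ ^ 4 := by
        linear_combination (1 - y⁻¹ ^ 2) * mul_inv_cancel₀ hy0.ne'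
      rw [this]
      linarith [pow_pos (inv_pos.2 hy0) 4]
  have := mul_le_mul_of_nonneg_left hI (by positivity : 0 ≤ s * exp (s ^ 2 / 2))
  rw [mul_exp_sq_div_two_mul_exp_neg] at this
  calc 1 - s⁻¹ ^ 2 = s * (s⁻¹ - s⁻¹ ^ 3) := by
        linear_combination (s⁻¹ ^ 2 - 1) * mul_inv_cancel₀ hs.ne'
    _ ≤ millsR s := this

theorem millsR_le_one_sub_inv_sq_add (hs : 0 < s) :
    millsR s ≤ 1 - s⁻¹ ^ 2 + 3 * s⁻¹ ^ 4 := by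
  have hu := tendsto_inv_atTop_zero (𝕜 := ℝ)
  have hp (y : ℝ) (hy : y ∈ Ici s) : HasDerivAt (fun y => y⁻¹ - y⁻¹ ^ 3 + 3 * y⁻¹ ^ 5)
      (-y⁻¹ ^ 2 + 3 * y⁻¹ ^ 4 - 15 * y⁻¹ ^ 6) y := by
    have hy0 : y ≠ 0 := (hs.trans_le hy).ne'
    exact (((hasDerivAt_inv hy0).sub ((hasDerivAt_inv hy0).pow 3)).add
      (((hasDerivAt_inv hy0).pow 5).const_mul 3)).congr_deriv (by rw [← inv_pow]; push_cast; ring)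
  have hI := integral_le_exp_neg_sq_div_two_mul hp
    (by simpa using (hu.sub (hu.pow 3)).add ((hu.pow 5).const_mul 3)) fun y hy => by
      have hy0 : 0 < y := hs.trans hy
      have : y * (y⁻¹ - y⁻¹ ^ 3 + 3 * y⁻¹ ^ 5) - (-y⁻¹ ^ 2 + 3 * y⁻¹ ^ 4 - 15 * y⁻¹ ^ 6) =
          1 + 15 * y⁻¹ ^ 6 := by
        linear_combination (1 - y⁻¹ ^ 2 + 3 * y⁻¹ ^ 4) * mul_inv_cancel₀ hy0.ne'
      rw [this]
      linarith [pow_pos (inv_pos.2 hy0) 6]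
  have := mul_le_mul_of_nonneg_left hI (by positivity : 0 ≤ s * exp (s ^ 2 / 2))
  rw [mul_exp_sq_div_two_mul_exp_neg] at this
  calc millsR s ≤ s * (s⁻¹ - s⁻¹ ^ 3 + 3 * s⁻¹ ^ 5) := this
    _ = 1 - s⁻¹ ^ 2 + 3 * s⁻¹ ^ 4 := by
        linear_combination (1 - s⁻¹ ^ 2 + 3 * s⁻¹ ^ 4) * mul_inv_cancel₀ hs.ne'

theorem millsR_le_exp_mul_div_add {δ : ℝ} (hs : 0 ≤ s) (hδ : 0 < δ) :
    millsR s ≤ exp (δ ^ 2 / 2) * (s / (s + δ)) := by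
  have hI := integral_exp_neg_sq_div_two_le (s := s) (add_pos_of_nonneg_of_pos hs hδ)
  calc millsR s ≤ s * exp (s ^ 2 / 2) * (exp ((s + δ) ^ 2 / 2 - (s + δ) * s) / (s + δ)) :=
        mul_le_mul_of_nonneg_left hI (by positivity)
    _ = exp (δ ^ 2 / 2) * (s / (s + δ)) := by
        rw [mul_div_assoc', mul_assoc, ← exp_add]
        ring_nf

theorem three_le_of_le_millsR (hs : 0 ≤ s) (h : 29 / 30 ≤ millsR s) : 3 ≤ s := by
  have hR := millsR_le_exp_mul_div_add hs (by norm_num : (0 : ℝ) < 1 / 3)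
  have hexp : exp ((1 / 3) ^ 2 / 2) ≤ 18 / 17 := by
    have := exp_bound_div_one_sub_of_interval (x := (1 / 3) ^ 2 / 2) (by norm_num) (by norm_num)
    norm_num at this ⊢
    exact this
  have h1 : 29 / 30 ≤ 18 / 17 * (s / (s + 1 / 3)) := h.trans (hR.trans (by gcongr))
  rw [mul_div_assoc', le_div_iff₀ (by positivity)] at h1
  linarith

end MillsRatio

-- `t ↦ t - 3 t²` is concave and exceeds `γ` both at `t = γ / (1 - 2γ)²` and at `t = 1/9`.
theorem sq_one_sub_two_mul_mul_le {γ t : ℝ} (hγ0 : 0 < γ) (hγ : γ ≤ 1 / 30) (ht0 : 0 ≤ t)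
    (ht : t ≤ 1 / 9) (h : t - 3 * t ^ 2 ≤ γ) : (1 - 2 * γ) ^ 2 * t ≤ γ := by
  nlinarith [mul_nonneg ht0 hγ0.le, mul_nonneg (sub_nonneg.2 ht) hγ0.le,
    mul_nonneg (sub_nonneg.2 hγ) ht0]

theorem abs_sub_inv_sqrt_le {γ s : ℝ} (hγ0 : 0 < γ) (hs : 0 < s) (h₁ : γ ≤ s⁻¹ ^ 2)
    (h₂ : (1 - 2 * γ) ^ 2 * s⁻¹ ^ 2 ≤ γ) : |s - (√γ)⁻¹| ≤ 2 * √γ := by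
  have hg : 0 < √γ := sqrt_pos.2 hγ0
  have hgs : (√γ * s) ^ 2 = γ * s ^ 2 := by rw [mul_pow, sq_sqrt hγ0.le]
  have hs2 : s⁻¹ ^ 2 * s ^ 2 = 1 := by rw [← mul_pow, inv_mul_cancel₀ hs.ne', one_pow]
  have hupper : √γ * s ≤ 1 := by
    refine abs_le_of_sq_le_sq' ?_ zero_le_one |>.2
    nlinarith [mul_le_mul_of_nonneg_right h₁ (sq_nonneg s)]
  have hlower : 1 - 2 * γ ≤ √γ * s := by
    refine abs_le_of_sq_le_sq' ?_ (by positivity) |>.2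
    nlinarith [mul_le_mul_of_nonneg_right h₂ (sq_nonneg s)]
  have hinv : (√γ)⁻¹ * √γ = 1 := inv_mul_cancel₀ hg.ne'
  rw [abs_le]
  constructor
  · nlinarith [mul_le_mul_of_nonneg_left hlower (inv_pos.2 hg).le, sq_sqrt hγ0.le]
  · nlinarith [mul_le_mul_of_nonneg_left hupper (inv_pos.2 hg).le]

/-- If `R(s_γ) = 1 - γ` with `s_γ > 0` and `0 < γ ≤ 1/30`, then `|s_γ - γ^{-1/2}| ≤ 2 γ^{1/2}`. -/
theorem stmt_10 (γ s : ℝ) (hγ0 : 0 < γ) (hγ : γ ≤ 1 / 30) (hs : 0 < s)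
    (hR : millsR s = 1 - γ) :
    |s - γ ^ (-(1 : ℝ) / 2)| ≤ 2 * γ ^ ((1 : ℝ) / 2) := by
  have h₁ : γ ≤ s⁻¹ ^ 2 := by linarith [one_sub_inv_sq_le_millsR hs]
  have hquad : s⁻¹ ^ 2 - 3 * (s⁻¹ ^ 2) ^ 2 ≤ γ := by
    linarith [millsR_le_one_sub_inv_sq_add hs, show (s⁻¹ ^ 2) ^ 2 = s⁻¹ ^ 4 by ring]
  have hs3 : 3 ≤ s := three_le_of_le_millsR hs.le (by linarith)
  have ht : s⁻¹ ^ 2 ≤ 1 / 9 :=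
    calc s⁻¹ ^ 2 ≤ 3⁻¹ ^ 2 := by gcongr
      _ = 1 / 9 := by norm_num
  rw [neg_div, rpow_neg hγ0.le, ← sqrt_eq_rpow]
  exact abs_sub_inv_sqrt_le hγ0 hs h₁ (sq_one_sub_two_mul_mul_le hγ0 hγ (by positivity) ht hquad)
end
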